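/- Pessimistic lower bound (MOPO-style): suppose u : S×A → ℝ≥0 satisfies u(s,a) ≥ |∑_{s'} (P̂(s'|s,a) − P(s'|s,a)) V^π_M(s')| for all (s,a). Define the penalized reward r̃(s,a) = r(s,a) − γ·u(s,a). Then for any policy π, the true return is lower-bounded by the penalized return in the model: η_M(π) ≥ η̃_{M̂}(π), where η̃_{M̂}(π) is the discounted return of π in M̂ with reward r̃. -/
import Mathlib


/-- Probability that the state-action pair at time `t` is `(s, a)`, when
states follow the transition kernel `P`, actions follow the stochastic policy
`π`, and the initial state follows `μ`. -/
def stepProb {S A : Type} [Fintype S] [Fintype A]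
    (P : S → A → S → ℝ) (π : S → A → ℝ) (μ : S → ℝ) : ℕ → S → A → ℝ
  | 0 => fun s a => μ s * π s a
  | (t + 1) => fun s' a' => (∑ s, ∑ a, stepProb P π μ t s a * P s a s') * π s' a'

/-- Unnormalized discounted state-action occupancy
`ρ(s,a) = ∑_t γ^t Pr(s_t = s, a_t = a)`. -/
noncomputable def occ {S A : Type} [Fintype S] [Fintype A] (γ : ℝ)
    (P : S → A → S → ℝ) (π : S → A → ℝ) (μ : S → ℝ) (s : S) (a : A) : ℝ :=
  ∑' t : ℕ, γ ^ t * stepProb P π μ t s a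

/-- Discounted return `η = ∑_t γ^t E[r(s_t, a_t)]`. -/
noncomputable def ret {S A : Type} [Fintype S] [Fintype A] (γ : ℝ)
    (P : S → A → S → ℝ) (π : S → A → ℝ) (μ : S → ℝ) (r : S → A → ℝ) : ℝ :=
  ∑' t : ℕ, γ ^ t * ∑ s, ∑ a, stepProb P π μ t s a * r s a

/-- Value function of policy `π` in the MDP with transitions `P` and reward
`r`, starting from state `s`. -/
noncomputable def Vval {S A : Type} [Fintype S] [Fintype A] [DecidableEq S] (γ : ℝ)
    (P : S → A → S → ℝ) (π : S → A → ℝ) (r : S → A → ℝ) (s : S) : ℝ :=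
  ret γ P π (fun s' => if s' = s then 1 else 0) r

section aux
set_option linter.unusedSectionVars false
variable {S A : Type} [Fintype S] [Fintype A] [DecidableEq S]
variable (P : S → A → S → ℝ) (π : S → A → ℝ) (μ : S → ℝ)
variable (hP : ∀ s a, (∀ s', 0 ≤ P s a s') ∧ ∑ s', P s a s' = 1)
variable (hπ : ∀ s, (∀ a, 0 ≤ π s a) ∧ ∑ a, π s a = 1)
variable (hμ : (∀ s, 0 ≤ μ s) ∧ ∑ s, μ s = 1)

include hP hπ hμ in
lemma stepProb_nonneg : ∀ t s a, 0 ≤ stepProb P π μ t s a := by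
  intro t
  induction t with
  | zero => intro s a; exact mul_nonneg (hμ.1 s) ((hπ s).1 a)
  | succ t ih =>
    intro s' a'
    refine mul_nonneg (Finset.sum_nonneg fun s _ => Finset.sum_nonneg fun a _ => ?_) ((hπ s').1 a')
    exact mul_nonneg (ih s a) ((hP s a).1 s')

include hP hπ hμ in
lemma stepProb_mass : ∀ t, ∑ s, ∑ a, stepProb P π μ t s a = 1 := by
  intro t
  induction t with
  | zero =>
    simp only [stepProb, ← Finset.mul_sum]
    calc ∑ s, μ s * ∑ a, π s a = ∑ s, μ s := by
          refine Finset.sum_congr rfl fun s _ => by rw [(hπ s).2, mul_one]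
      _ = 1 := hμ.2
  | succ t ih =>
    simp only [stepProb, ← Finset.mul_sum]
    calc ∑ s', (∑ s, ∑ a, stepProb P π μ t s a * P s a s') * ∑ a, π s' a
        = ∑ s', ∑ s, ∑ a, stepProb P π μ t s a * P s a s' := by
          refine Finset.sum_congr rfl fun s' _ => by rw [(hπ s').2, mul_one]
      _ = ∑ s, ∑ a, ∑ s', stepProb P π μ t s a * P s a s' := by
          rw [Finset.sum_comm]
          exact Finset.sum_congr rfl fun s _ => Finset.sum_comm
      _ = ∑ s, ∑ a, stepProb P π μ t s a := by
          refine Finset.sum_congr rfl fun s _ => Finset.sum_congr rfl fun a _ => ?_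
          rw [← Finset.mul_sum, (hP s a).2, mul_one]
      _ = 1 := ih

include hP hπ hμ in
lemma stepProb_le_one : ∀ t s a, stepProb P π μ t s a ≤ 1 := by
  intro t s a
  have h1 := stepProb_mass P π μ hP hπ hμ t
  have hn := stepProb_nonneg P π μ hP hπ hμ
  calc stepProb P π μ t s a ≤ ∑ b, stepProb P π μ t s b :=
        Finset.single_le_sum (f := fun b => stepProb P π μ t s b) (fun b _ => hn t s b) (Finset.mem_univ a)
    _ ≤ ∑ s, ∑ b, stepProb P π μ t s b :=
        Finset.single_le_sum (f := fun s => ∑ b, stepProb P π μ t s b)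
          (fun s _ => Finset.sum_nonneg fun b _ => hn t s b) (Finset.mem_univ s)
    _ = 1 := h1

include hP hπ hμ in
lemma step_expect_abs_le (f : S → A → ℝ) (t : ℕ) :
    |∑ s, ∑ a, stepProb P π μ t s a * f s a| ≤ ∑ s, ∑ a, |f s a| := by
  calc |∑ s, ∑ a, stepProb P π μ t s a * f s a|
      ≤ ∑ s, |∑ a, stepProb P π μ t s a * f s a| := Finset.abs_sum_le_sum_abs _ _
    _ ≤ ∑ s, ∑ a, |stepProb P π μ t s a * f s a| :=
        Finset.sum_le_sum fun s _ => Finset.abs_sum_le_sum_abs _ _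
    _ ≤ ∑ s, ∑ a, |f s a| := by
        refine Finset.sum_le_sum fun s _ => Finset.sum_le_sum fun a _ => ?_
        rw [abs_mul]
        have h0 := stepProb_nonneg P π μ hP hπ hμ t s a
        have h1 := stepProb_le_one P π μ hP hπ hμ t s a
        calc |stepProb P π μ t s a| * |f s a| = stepProb P π μ t s a * |f s a| := by
              rw [abs_of_nonneg h0]
          _ ≤ 1 * |f s a| := mul_le_mul_of_nonneg_right h1 (abs_nonneg _)
          _ = |f s a| := one_mul _

include hP hπ hμ in
lemma summable_step {γ : ℝ} (hγ0 : 0 ≤ γ) (hγ1 : γ < 1) (f : S → A → ℝ) :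
    Summable (fun t => γ ^ t * ∑ s, ∑ a, stepProb P π μ t s a * f s a) := by
  have hg : Summable (fun t : ℕ => γ ^ t * ∑ s, ∑ a, |f s a|) :=
    (summable_geometric_of_lt_one hγ0 hγ1).mul_right _
  have habs : Summable (fun t : ℕ => |γ ^ t * ∑ s, ∑ a, stepProb P π μ t s a * f s a|) := by
    refine Summable.of_nonneg_of_le (fun t => abs_nonneg _) (fun t => ?_) hg
    rw [abs_mul, abs_pow, abs_of_nonneg hγ0]
    exact mul_le_mul_of_nonneg_left (step_expect_abs_le P π μ hP hπ hμ f t)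
      (pow_nonneg hγ0 t)
  exact habs.of_abs

lemma stepProb_factor (hπ : ∀ s, (∀ a, 0 ≤ π s a) ∧ ∑ a, π s a = 1) :
    ∀ t s a, stepProb P π μ t s a = (∑ b, stepProb P π μ t s b) * π s a := by
  intro t s a
  cases t with
  | zero =>
    simp only [stepProb, ← Finset.sum_mul]
    rw [← Finset.mul_sum, (hπ s).2, mul_one]
  | succ t =>
    simp only [stepProb, ← Finset.sum_mul]
    rw [← Finset.mul_sum, (hπ s).2, mul_one]

lemma stepProb_shift :
    ∀ t s a, stepProb P π μ (t + 1) s a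
      = stepProb P π (fun s' => ∑ s, ∑ a, μ s * π s a * P s a s') t s a := by
  intro t
  induction t with
  | zero => intro s a; simp [stepProb]
  | succ t ih =>
    intro s' a'
    show (∑ s, ∑ a, stepProb P π μ (t + 1) s a * P s a s') * π s' a' = _
    rw [show stepProb P π (fun s' => ∑ s, ∑ a, μ s * π s a * P s a s') (t + 1) s' a'
        = (∑ s, ∑ a, stepProb P π (fun s' => ∑ s, ∑ a, μ s * π s a * P s a s') t s a * P s a s') * π s' a' from rfl]
    congr 1
    exact Finset.sum_congr rfl fun s _ => Finset.sum_congr rfl fun a _ => by rw [ih s a]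

lemma stepProb_lin_mu :
    ∀ t s a, stepProb P π μ t s a
      = ∑ s₀, μ s₀ * stepProb P π (fun s' => if s' = s₀ then 1 else 0) t s a := by
  intro t
  induction t with
  | zero =>
    intro s a
    simp only [stepProb]
    rw [Finset.sum_eq_single s]
    · simp
    · intro b _ hb
      simp [Ne.symm hb]
    · simp
  | succ t ih =>
    intro s' a'
    simp only [stepProb]
    have key : (∑ s, ∑ a, stepProb P π μ t s a * P s a s')
        = ∑ s₀, μ s₀ * ∑ s, ∑ a, stepProb P π (fun s' => if s' = s₀ then 1 else 0) t s a * P s a s' := by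
      calc ∑ s, ∑ a, stepProb P π μ t s a * P s a s'
          = ∑ s, ∑ a, ∑ s₀, μ s₀ * stepProb P π (fun s' => if s' = s₀ then 1 else 0) t s a * P s a s' := by
            refine Finset.sum_congr rfl fun s _ => Finset.sum_congr rfl fun a _ => ?_
            rw [ih s a, Finset.sum_mul]
        _ = ∑ s₀, ∑ s, ∑ a, μ s₀ * stepProb P π (fun s' => if s' = s₀ then 1 else 0) t s a * P s a s' := by
            exact Eq.trans (Finset.sum_congr rfl fun s _ => Finset.sum_comm) Finset.sum_comm
        _ = ∑ s₀, μ s₀ * ∑ s, ∑ a, stepProb P π (fun s' => if s' = s₀ then 1 else 0) t s a * P s a s' := by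
            refine Finset.sum_congr rfl fun s₀ _ => ?_
            rw [Finset.mul_sum]
            refine Finset.sum_congr rfl fun s _ => ?_
            rw [Finset.mul_sum]
            exact Finset.sum_congr rfl fun a _ => by ring
    rw [key, Finset.sum_mul]
    exact Finset.sum_congr rfl fun x _ => by ring

lemma delta_dist (s₀ : S) :
    (∀ s : S, 0 ≤ (if s = s₀ then (1:ℝ) else 0)) ∧ ∑ s, (if s = s₀ then (1:ℝ) else 0) = 1 := by
  constructor
  · intro s; split <;> norm_num
  · simp

include hP hπ hμ in
lemma ret_lin_mu {γ : ℝ} (hγ0 : 0 ≤ γ) (hγ1 : γ < 1) (r : S → A → ℝ) :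
    ret γ P π μ r = ∑ s₀, μ s₀ * Vval γ P π r s₀ := by
  have hsum : ∀ s₀ : S, Summable (fun t => μ s₀ * (γ ^ t *
      ∑ s, ∑ a, stepProb P π (fun s' => if s' = s₀ then 1 else 0) t s a * r s a)) := by
    intro s₀
    exact (summable_step P π _ hP hπ (delta_dist s₀) hγ0 hγ1 r).mul_left _
  unfold ret Vval ret
  have hrhs : (∑ s₀, μ s₀ * ∑' t : ℕ, γ ^ t *
      ∑ s, ∑ a, stepProb P π (fun s' => if s' = s₀ then 1 else 0) t s a * r s a)
      = ∑' t : ℕ, ∑ s₀, μ s₀ * (γ ^ t *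
      ∑ s, ∑ a, stepProb P π (fun s' => if s' = s₀ then 1 else 0) t s a * r s a) := by
    rw [Summable.tsum_finsetSum (fun s₀ _ => hsum s₀)]
    exact Finset.sum_congr rfl fun s₀ _ => (tsum_mul_left).symm
  rw [hrhs]
  refine tsum_congr fun t => ?_
  calc γ ^ t * ∑ s, ∑ a, stepProb P π μ t s a * r s a
      = γ ^ t * ∑ s, ∑ a, ∑ s₀, μ s₀ * stepProb P π (fun s' => if s' = s₀ then 1 else 0) t s a * r s a := by
        congr 1
        refine Finset.sum_congr rfl fun s _ => Finset.sum_congr rfl fun a _ => ?_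
        rw [stepProb_lin_mu P π μ t s a, Finset.sum_mul]
    _ = γ ^ t * ∑ s₀, ∑ s, ∑ a, μ s₀ * stepProb P π (fun s' => if s' = s₀ then 1 else 0) t s a * r s a := by
        congr 1
        exact Eq.trans (Finset.sum_congr rfl fun s _ => Finset.sum_comm) Finset.sum_comm
    _ = ∑ s₀, μ s₀ * (γ ^ t * ∑ s, ∑ a, stepProb P π (fun s' => if s' = s₀ then 1 else 0) t s a * r s a) := by
        rw [Finset.mul_sum]
        refine Finset.sum_congr rfl fun s₀ _ => ?_
        rw [show (∑ s, ∑ a, μ s₀ * stepProb P π (fun s' => if s' = s₀ then 1 else 0) t s a * r s a)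
            = μ s₀ * ∑ s, ∑ a, stepProb P π (fun s' => if s' = s₀ then 1 else 0) t s a * r s a by
          rw [Finset.mul_sum]
          refine Finset.sum_congr rfl fun s _ => ?_
          rw [Finset.mul_sum]
          exact Finset.sum_congr rfl fun a _ => by ring]
        ring

include hP hπ hμ in
lemma ret_shift {γ : ℝ} (hγ0 : 0 ≤ γ) (hγ1 : γ < 1) (r : S → A → ℝ) :
    ret γ P π μ r = (∑ s, ∑ a, μ s * π s a * r s a)
      + γ * ret γ P π (fun s' => ∑ s, ∑ a, μ s * π s a * P s a s') r := by
  unfold ret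
  rw [Summable.tsum_eq_zero_add (summable_step P π μ hP hπ hμ hγ0 hγ1 r)]
  congr 1
  · simp [stepProb]
  · rw [← tsum_mul_left]
    refine tsum_congr fun t => ?_
    have : ∀ s a, stepProb P π μ (t+1) s a
        = stepProb P π (fun s' => ∑ s, ∑ a, μ s * π s a * P s a s') t s a :=
      stepProb_shift P π μ (t)
    rw [show (∑ s, ∑ a, stepProb P π μ (t+1) s a * r s a)
        = ∑ s, ∑ a, stepProb P π (fun s' => ∑ s, ∑ a, μ s * π s a * P s a s') t s a * r s a from
      Finset.sum_congr rfl fun s _ => Finset.sum_congr rfl fun a _ => by rw [this s a]]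
    ring

include hP hπ in
lemma bellman {γ : ℝ} (hγ0 : 0 ≤ γ) (hγ1 : γ < 1) (r : S → A → ℝ) (s : S) :
    Vval γ P π r s = ∑ a, π s a * (r s a + γ * ∑ s', P s a s' * Vval γ P π r s') := by
  have hδ := delta_dist (S := S) s
  have h1 := ret_shift P π (fun s' => if s' = s then 1 else 0) hP hπ hδ hγ0 hγ1 r
  have h2 := ret_lin_mu P π (fun s' => ∑ s₀, ∑ a, (if s₀ = s then (1:ℝ) else 0) * π s₀ a * P s₀ a s') hP hπ ?_ hγ0 hγ1 r
  · rw [show Vval γ P π r s = ret γ P π (fun s' => if s' = s then 1 else 0) r from rfl, h1, h2]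
    have e1 : (∑ s₀, ∑ a, (if s₀ = s then (1:ℝ) else 0) * π s₀ a * r s₀ a) = ∑ a, π s a * r s a := by
      rw [Finset.sum_eq_single s]
      · simp
      · intro b _ hb; simp [hb]
      · simp
    have e2 : ∀ s', (∑ s₀, ∑ a, (if s₀ = s then (1:ℝ) else 0) * π s₀ a * P s₀ a s') = ∑ a, π s a * P s a s' := by
      intro s'
      rw [Finset.sum_eq_single s]
      · simp
      · intro b _ hb; simp [hb]
      · simp
    rw [e1]
    have e3 : (∑ s', (∑ s₀, ∑ a, (if s₀ = s then (1:ℝ) else 0) * π s₀ a * P s₀ a s') * Vval γ P π r s')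
        = ∑ a, π s a * ∑ s', P s a s' * Vval γ P π r s' := by
      calc (∑ s', (∑ s₀, ∑ a, (if s₀ = s then (1:ℝ) else 0) * π s₀ a * P s₀ a s') * Vval γ P π r s')
          = ∑ s', (∑ a, π s a * P s a s') * Vval γ P π r s' :=
            Finset.sum_congr rfl fun s' _ => by rw [e2 s']
        _ = ∑ s', ∑ a, π s a * P s a s' * Vval γ P π r s' :=
            Finset.sum_congr rfl fun s' _ => Finset.sum_mul _ _ _
        _ = ∑ a, ∑ s', π s a * P s a s' * Vval γ P π r s' := Finset.sum_comm
        _ = ∑ a, π s a * ∑ s', P s a s' * Vval γ P π r s' := by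
            refine Finset.sum_congr rfl fun a _ => ?_
            rw [Finset.mul_sum]
            exact Finset.sum_congr rfl fun s' _ => by ring
    rw [e3, Finset.mul_sum, ← Finset.sum_add_distrib]
    exact Finset.sum_congr rfl fun a _ => by ring
  · constructor
    · intro s'
      refine Finset.sum_nonneg fun s₀ _ => Finset.sum_nonneg fun a _ => ?_
      refine mul_nonneg (mul_nonneg ?_ ((hπ s₀).1 a)) ((hP s₀ a).1 s')
      split <;> norm_num
    · calc ∑ s', ∑ s₀, ∑ a, (if s₀ = s then (1:ℝ) else 0) * π s₀ a * P s₀ a s'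
          = ∑ s₀, ∑ a, ∑ s', (if s₀ = s then (1:ℝ) else 0) * π s₀ a * P s₀ a s' := by
            exact Eq.trans Finset.sum_comm (Finset.sum_congr rfl fun s₀ _ => Finset.sum_comm)
        _ = ∑ s₀, ∑ a, (if s₀ = s then (1:ℝ) else 0) * π s₀ a := by
            refine Finset.sum_congr rfl fun s₀ _ => Finset.sum_congr rfl fun a _ => ?_
            rw [← Finset.mul_sum, (hP s₀ a).2, mul_one]
        _ = 1 := by
            rw [Finset.sum_eq_single s]
            · simp [(hπ s).2]
            · intro b _ hb; simp [hb]
            · simp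

include hπ in
lemma sum_step_mul_state (t : ℕ) (g : S → ℝ) (h : S → A → ℝ)
    (hg : ∀ s, g s = ∑ a, π s a * h s a) :
    ∑ s, ∑ a, stepProb P π μ t s a * g s = ∑ s, ∑ a, stepProb P π μ t s a * h s a := by
  refine Finset.sum_congr rfl fun s _ => ?_
  calc ∑ a, stepProb P π μ t s a * g s
      = ∑ a, ((∑ b, stepProb P π μ t s b) * π s a) * g s :=
        Finset.sum_congr rfl fun a _ => by rw [← stepProb_factor P π μ hπ t s a]
    _ = ((∑ b, stepProb P π μ t s b) * g s) * ∑ a, π s a := by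
        rw [Finset.mul_sum]
        exact Finset.sum_congr rfl fun a _ => by ring
    _ = (∑ b, stepProb P π μ t s b) * ∑ a, π s a * h s a := by
        rw [(hπ s).2, mul_one, hg s]
    _ = ∑ a, ((∑ b, stepProb P π μ t s b) * π s a) * h s a := by
        rw [Finset.mul_sum]
        exact Finset.sum_congr rfl fun a _ => by ring
    _ = ∑ a, stepProb P π μ t s a * h s a :=
        Finset.sum_congr rfl fun a _ => by rw [← stepProb_factor P π μ hπ t s a]

include hπ in
lemma sum_stepSucc_mul_state (t : ℕ) (g : S → ℝ) :
    ∑ s', ∑ a', stepProb P π μ (t + 1) s' a' * g s'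
      = ∑ s, ∑ a, stepProb P π μ t s a * ∑ s', P s a s' * g s' := by
  calc ∑ s', ∑ a', stepProb P π μ (t + 1) s' a' * g s'
      = ∑ s', (∑ s, ∑ a, stepProb P π μ t s a * P s a s') * g s' := by
        refine Finset.sum_congr rfl fun s' _ => ?_
        show (∑ a', ((∑ s, ∑ a, stepProb P π μ t s a * P s a s') * π s' a') * g s') = _
        calc ∑ a', ((∑ s, ∑ a, stepProb P π μ t s a * P s a s') * π s' a') * g s'
            = ((∑ s, ∑ a, stepProb P π μ t s a * P s a s') * g s') * ∑ a', π s' a' := by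
              rw [Finset.mul_sum]
              exact Finset.sum_congr rfl fun a' _ => by ring
          _ = (∑ s, ∑ a, stepProb P π μ t s a * P s a s') * g s' := by
              rw [(hπ s').2, mul_one]
    _ = ∑ s', ∑ s, ∑ a, stepProb P π μ t s a * P s a s' * g s' := by
        refine Finset.sum_congr rfl fun s' _ => ?_
        rw [Finset.sum_mul]
        exact Finset.sum_congr rfl fun s _ => by rw [Finset.sum_mul]
    _ = ∑ s, ∑ a, ∑ s', stepProb P π μ t s a * P s a s' * g s' :=
        Eq.trans Finset.sum_comm (Finset.sum_congr rfl fun s _ => Finset.sum_comm)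
    _ = ∑ s, ∑ a, stepProb P π μ t s a * ∑ s', P s a s' * g s' := by
        refine Finset.sum_congr rfl fun s _ => Finset.sum_congr rfl fun a _ => ?_
        rw [Finset.mul_sum]
        exact Finset.sum_congr rfl fun s' _ => by ring
end aux

/-- Pessimistic lower bound (MOPO-style): if `u(s,a)` dominates the model error
`|∑_{s'} (P̂ − P)(s'|s,a) V^π_M(s')|`, then the true return of `π` is lower
bounded by its return in the model `M̂` with penalized reward
`r̃(s,a) = r(s,a) − γ u(s,a)`. -/
theorem pessimistic_lower_bound {S A : Type}
    [Fintype S] [Fintype A] [DecidableEq S]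
    (γ : ℝ) (hγ0 : 0 ≤ γ) (hγ1 : γ < 1)
    (P Phat : S → A → S → ℝ) (π : S → A → ℝ) (μ : S → ℝ) (r : S → A → ℝ)
    (hP : ∀ s a, (∀ s', 0 ≤ P s a s') ∧ ∑ s', P s a s' = 1)
    (hPhat : ∀ s a, (∀ s', 0 ≤ Phat s a s') ∧ ∑ s', Phat s a s' = 1)
    (hπ : ∀ s, (∀ a, 0 ≤ π s a) ∧ ∑ a, π s a = 1)
    (hμ : (∀ s, 0 ≤ μ s) ∧ ∑ s, μ s = 1)
    (u : S → A → ℝ) (hu0 : ∀ s a, 0 ≤ u s a)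
    (hu : ∀ s a, |∑ s', (Phat s a s' - P s a s') * Vval γ P π r s'| ≤ u s a) :
    ret γ Phat π μ (fun s a => r s a - γ * u s a) ≤ ret γ P π μ r := by
  set V : S → ℝ := Vval γ P π r with hV
  set D : S → A → ℝ := fun s a => ∑ s', (Phat s a s' - P s a s') * V s' with hD
  set B : ℕ → ℝ := fun t => ∑ s, ∑ a, stepProb Phat π μ t s a * r s a with hB
  set U : ℕ → ℝ := fun t => ∑ s, ∑ a, stepProb Phat π μ t s a * u s a with hU
  set Δ : ℕ → ℝ := fun t => ∑ s, ∑ a, stepProb Phat π μ t s a * D s a with hΔ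
  set X : ℕ → ℝ := fun t => ∑ s, ∑ a, stepProb Phat π μ t s a * V s with hX
  -- summabilities
  have hsB : Summable (fun t => γ ^ t * B t) := summable_step Phat π μ hPhat hπ hμ hγ0 hγ1 r
  have hsU : Summable (fun t => γ ^ t * U t) := summable_step Phat π μ hPhat hπ hμ hγ0 hγ1 u
  have hsΔ : Summable (fun t => γ ^ t * Δ t) := summable_step Phat π μ hPhat hπ hμ hγ0 hγ1 D
  -- key identities
  have hXt : ∀ t, X t = B t + γ * ∑ s, ∑ a, stepProb Phat π μ t s a * ∑ s', P s a s' * V s' := by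
    intro t
    have hb : (∑ s, ∑ a, stepProb Phat π μ t s a * V s)
        = ∑ s, ∑ a, stepProb Phat π μ t s a * (r s a + γ * ∑ s', P s a s' * V s') :=
      sum_step_mul_state Phat π μ hπ t V
        (fun s a => r s a + γ * ∑ s', P s a s' * V s')
        (fun s => bellman P π hP hπ hγ0 hγ1 r s)
    show (∑ s, ∑ a, stepProb Phat π μ t s a * V s)
        = (∑ s, ∑ a, stepProb Phat π μ t s a * r s a)
          + γ * ∑ s, ∑ a, stepProb Phat π μ t s a * ∑ s', P s a s' * V s'
    rw [hb]
    rw [show (∑ s, ∑ a, stepProb Phat π μ t s a * (r s a + γ * ∑ s', P s a s' * V s'))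
        = ∑ s, ∑ a, (stepProb Phat π μ t s a * r s a
            + γ * (stepProb Phat π μ t s a * ∑ s', P s a s' * V s')) from
      Finset.sum_congr rfl fun s _ => Finset.sum_congr rfl fun a _ => by ring]
    rw [show (∑ s, ∑ a, (stepProb Phat π μ t s a * r s a
            + γ * (stepProb Phat π μ t s a * ∑ s', P s a s' * V s')))
        = (∑ s, ∑ a, stepProb Phat π μ t s a * r s a)
          + ∑ s, ∑ a, γ * (stepProb Phat π μ t s a * ∑ s', P s a s' * V s') by
      rw [← Finset.sum_add_distrib]
      exact Finset.sum_congr rfl fun s _ => Finset.sum_add_distrib]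
    congr 1
    rw [Finset.mul_sum]
    exact Finset.sum_congr rfl fun s _ => by rw [Finset.mul_sum]
  have hXsucc : ∀ t, X (t + 1) = ∑ s, ∑ a, stepProb Phat π μ t s a * ∑ s', Phat s a s' * V s' :=
    fun t => sum_stepSucc_mul_state Phat π μ hπ t V
  have hDsplit : ∀ t, Δ t = (∑ s, ∑ a, stepProb Phat π μ t s a * ∑ s', Phat s a s' * V s')
      - ∑ s, ∑ a, stepProb Phat π μ t s a * ∑ s', P s a s' * V s' := by
    intro t
    show (∑ s, ∑ a, stepProb Phat π μ t s a * (∑ s', (Phat s a s' - P s a s') * V s'))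
        = (∑ s, ∑ a, stepProb Phat π μ t s a * ∑ s', Phat s a s' * V s')
          - ∑ s, ∑ a, stepProb Phat π μ t s a * ∑ s', P s a s' * V s'
    rw [← Finset.sum_sub_distrib]
    refine Finset.sum_congr rfl fun s _ => ?_
    rw [← Finset.sum_sub_distrib]
    refine Finset.sum_congr rfl fun a _ => ?_
    rw [show (∑ s', (Phat s a s' - P s a s') * V s')
        = (∑ s', Phat s a s' * V s') - ∑ s', P s a s' * V s' by
      rw [← Finset.sum_sub_distrib]
      exact Finset.sum_congr rfl fun s' _ => by ring]
    ring
  have hkey : ∀ t, γ ^ t * B t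
      = (γ ^ t * X t - γ ^ (t + 1) * X (t + 1)) + γ ^ (t + 1) * Δ t := by
    intro t
    rw [hXt t, hXsucc t, hDsplit t, pow_succ]
    ring
  -- telescoping
  have htendX : Filter.Tendsto (fun t => γ ^ t * X t) Filter.atTop (nhds 0) := by
    have hb : ∀ t, ‖γ ^ t * X t‖ ≤ (∑ s, ∑ _a : A, |V s|) * γ ^ t := by
      intro t
      rw [Real.norm_eq_abs, abs_mul, abs_pow, abs_of_nonneg hγ0, mul_comm]
      exact mul_le_mul_of_nonneg_right
        (step_expect_abs_le Phat π μ hPhat hπ hμ (fun s _ => V s) t) (pow_nonneg hγ0 t)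
    have hg : Filter.Tendsto (fun t : ℕ => (∑ s, ∑ _a : A, |V s|) * γ ^ t) Filter.atTop (nhds 0) := by
      have := (tendsto_pow_atTop_nhds_zero_of_lt_one hγ0 hγ1).const_mul (∑ s, ∑ _a : A, |V s|)
      simpa using this
    exact squeeze_zero_norm hb hg
  have hsTel : Summable (fun t => γ ^ t * X t - γ ^ (t + 1) * X (t + 1)) := by
    have : (fun t => γ ^ t * X t - γ ^ (t + 1) * X (t + 1))
        = fun t => γ ^ t * B t - γ * (γ ^ t * Δ t) := by
      funext t
      rw [hkey t, pow_succ]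
      ring
    rw [this]
    exact hsB.sub (hsΔ.mul_left γ)
  have hTel : (∑' t, (γ ^ t * X t - γ ^ (t + 1) * X (t + 1))) = X 0 := by
    have hps : Filter.Tendsto
        (fun n => ∑ i ∈ Finset.range n, (γ ^ i * X i - γ ^ (i + 1) * X (i + 1)))
        Filter.atTop (nhds (X 0)) := by
      have heq : ∀ n, (∑ i ∈ Finset.range n, (γ ^ i * X i - γ ^ (i + 1) * X (i + 1)))
          = γ ^ 0 * X 0 - γ ^ n * X n := fun n => Finset.sum_range_sub' (fun i => γ ^ i * X i) n
      simp only [heq, pow_zero, one_mul]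
      have := Filter.Tendsto.const_sub (X 0) htendX
      simpa using this
    exact ((hsTel.hasSum_iff_tendsto_nat).mpr hps).tsum_eq
  -- series identity
  have hBsum : (∑' t, γ ^ t * B t) = X 0 + γ * ∑' t, γ ^ t * Δ t := by
    calc (∑' t, γ ^ t * B t)
        = ∑' t, ((γ ^ t * X t - γ ^ (t + 1) * X (t + 1)) + γ * (γ ^ t * Δ t)) := by
          refine tsum_congr fun t => ?_
          rw [hkey t, pow_succ]
          ring
      _ = (∑' t, (γ ^ t * X t - γ ^ (t + 1) * X (t + 1))) + ∑' t, γ * (γ ^ t * Δ t) :=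
          Summable.tsum_add hsTel (hsΔ.mul_left γ)
      _ = X 0 + γ * ∑' t, γ ^ t * Δ t := by rw [hTel, tsum_mul_left]
  have hX0 : X 0 = ret γ P π μ r := by
    rw [ret_lin_mu P π μ hP hπ hμ hγ0 hγ1 r]
    show (∑ s, ∑ a, (μ s * π s a) * V s) = ∑ s₀, μ s₀ * Vval γ P π r s₀
    refine Finset.sum_congr rfl fun s _ => ?_
    calc ∑ a, (μ s * π s a) * V s = (μ s * V s) * ∑ a, π s a := by
          rw [Finset.mul_sum]
          exact Finset.sum_congr rfl fun a _ => by ring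
      _ = μ s * Vval γ P π r s := by rw [(hπ s).2, mul_one, hV]
  -- left-hand side
  have hLHS : ret γ Phat π μ (fun s a => r s a - γ * u s a)
      = (∑' t, γ ^ t * B t) - γ * ∑' t, γ ^ t * U t := by
    have hterm : ret γ Phat π μ (fun s a => r s a - γ * u s a)
        = ∑' t, (γ ^ t * B t - γ * (γ ^ t * U t)) := by
      refine tsum_congr fun t => ?_
      show γ ^ t * (∑ s, ∑ a, stepProb Phat π μ t s a * (r s a - γ * u s a))
          = γ ^ t * (∑ s, ∑ a, stepProb Phat π μ t s a * r s a)
            - γ * (γ ^ t * (∑ s, ∑ a, stepProb Phat π μ t s a * u s a))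
      rw [show (∑ s, ∑ a, stepProb Phat π μ t s a * (r s a - γ * u s a))
          = (∑ s, ∑ a, stepProb Phat π μ t s a * r s a)
            - ∑ s, ∑ a, γ * (stepProb Phat π μ t s a * u s a) by
        rw [← Finset.sum_sub_distrib]
        refine Finset.sum_congr rfl fun s _ => ?_
        rw [← Finset.sum_sub_distrib]
        exact Finset.sum_congr rfl fun a _ => by ring]
      rw [show (∑ s, ∑ a, γ * (stepProb Phat π μ t s a * u s a))
          = γ * ∑ s, ∑ a, stepProb Phat π μ t s a * u s a by
        rw [Finset.mul_sum]
        exact Finset.sum_congr rfl fun s _ => by rw [Finset.mul_sum]]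
      ring
    rw [hterm, Summable.tsum_sub hsB (hsU.mul_left γ), tsum_mul_left]
  -- compare the penalty terms
  have hDU : (∑' t, γ ^ t * Δ t) ≤ ∑' t, γ ^ t * U t := by
    refine Summable.tsum_le_tsum (fun t => ?_) hsΔ hsU
    show γ ^ t * (∑ s, ∑ a, stepProb Phat π μ t s a * D s a)
        ≤ γ ^ t * (∑ s, ∑ a, stepProb Phat π μ t s a * u s a)
    refine mul_le_mul_of_nonneg_left ?_ (pow_nonneg hγ0 t)
    refine Finset.sum_le_sum fun s _ => Finset.sum_le_sum fun a _ => ?_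
    refine mul_le_mul_of_nonneg_left ?_ (stepProb_nonneg Phat π μ hPhat hπ hμ t s a)
    exact le_trans (le_abs_self _) (hu s a)
  rw [hLHS, hBsum, hX0]
  nlinarith [hDU, hγ0]
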